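/- Define G_{i j} = (−1)^{(j-i)/2} (1/2^j) (2j − 1)(j + i − 2)! / ( (i − 1)! ((j − i)/2)! ((j + i)/2 − 1)! ) when i ≤ j and i + j is even, and G_{i j} = 0 otherwise. Then for every N ≥ 1 the (N × N) matrix G is the inverse of the (N × N) matrix F: Σ_{k=1}^{N} F_{i k} G_{k j} = δ_{i j} for all 1 ≤ i, j ≤ N. -/

import Mathlib

open Polynomial

/-- The n-th Legendre polynomial, defined via the Rodrigues formula
P_n(eta) = (1/(2^n n!)) d^n/d eta^n (eta^2 - 1)^n. -/
noncomputable def legendre (n : ℕ) : Polynomial ℝ :=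
  ((1 : ℝ) / (2 ^ n * n.factorial)) • (Polynomial.derivative^[n] ((X ^ 2 - 1) ^ n))

/-- The matrix of moments of the Legendre polynomials:
F i j = ∫_{-1}^{1} P_{i-1}(eta) eta^{j-1} d eta (intended for i, j ≥ 1). -/
noncomputable def Fmat (i j : ℕ) : ℝ :=
  ∫ η in (-1 : ℝ)..1, (legendre (i - 1)).eval η * η ^ (j - 1)

/-- The explicit inverse matrix G of F:
G_{ij} = (-1)^{(j-i)/2} (1/2^j) (2j-1) (j+i-2)! / ((i-1)! ((j-i)/2)! ((j+i)/2 - 1)!)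
when i ≤ j and i + j is even, and G_{ij} = 0 otherwise. -/
noncomputable def Gmat (i j : ℕ) : ℝ :=
  if i ≤ j ∧ (i + j) % 2 = 0 then
    (-1 : ℝ) ^ ((j - i) / 2) * (1 / 2 ^ j) * (2 * (j : ℝ) - 1) *
      ((j + i - 2).factorial : ℝ) /
      (((i - 1).factorial : ℝ) * (((j - i) / 2).factorial : ℝ) *
        (((j + i) / 2 - 1).factorial : ℝ))
  else 0

/-!
Column `n + 1` of `G` holds the coefficients of `(2n+1)/2 · Pₙ`, so `(F G)ᵢⱼ` is
`(2j-1)/2 · ∫₋₁¹ P_{i-1} P_{j-1}`. By Rodrigues' formula and `n`-fold integration by parts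
(the derivatives of order `< n` of `(x² - 1)ⁿ` vanish at `±1`),
`∫ p Pₙ = (-1)ⁿ/(2ⁿ n!) ∫ p⁽ⁿ⁾ (x² - 1)ⁿ`. This vanishes for `deg p < n`, and for `p = Pₙ` it
reduces to the Wallis-type integral `∫₋₁¹ (1 - x²)ⁿ = 2^(2n+1) (n!)² / (2n+1)!`, giving
`∫ Pₙ² = 2/(2n+1)`.
-/

open intervalIntegral MeasureTheory

namespace Polynomial

section CommRing

variable {R : Type*} [CommRing R]

theorem X_sq_sub_one_pow_eq_expand (n : ℕ) :
    (X ^ 2 - 1 : R[X]) ^ n = expand R 2 ((X + C (-1)) ^ n) := by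
  simp [sub_eq_add_neg]

theorem coeff_X_sq_sub_one_pow (n m : ℕ) :
    ((X ^ 2 - 1 : R[X]) ^ n).coeff m =
      if 2 ∣ m then (-1) ^ (n - m / 2) * (n.choose (m / 2) : R) else 0 := by
  rw [X_sq_sub_one_pow_eq_expand, coeff_expand two_pos, coeff_X_add_C_pow]

theorem natDegree_X_sq_sub_one_pow_le (n : ℕ) :
    ((X ^ 2 - 1 : R[X]) ^ n).natDegree ≤ 2 * n := by
  rw [X_sq_sub_one_pow_eq_expand, natDegree_expand, mul_comm]
  have h : ((X + C (-1) : R[X]) ^ n).natDegree ≤ n * 1 :=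
    natDegree_pow_le_of_le n (natDegree_add_C.trans_le natDegree_X_le)
  omega

theorem iterate_derivative_X_sq_sub_one_pow_two_mul (n : ℕ) :
    derivative^[2 * n] ((X ^ 2 - 1 : R[X]) ^ n) = C ((2 * n).factorial : R) := by
  have hdeg : (derivative^[2 * n] ((X ^ 2 - 1 : R[X]) ^ n)).natDegree = 0 := by
    have := natDegree_iterate_derivative ((X ^ 2 - 1 : R[X]) ^ n) (2 * n)
    have := natDegree_X_sq_sub_one_pow_le (R := R) n
    omega
  rw [eq_C_of_natDegree_eq_zero hdeg, coeff_iterate_derivative, coeff_X_sq_sub_one_pow]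
  simp [Nat.descFactorial_self]

theorem eval_iterate_derivative_eq_zero_of_pow_dvd {p : R[X]} {a : R} {n s : ℕ}
    (h : (X - C a) ^ n ∣ p) (hs : s < n) : (derivative^[s] p).eval a = 0 :=
  dvd_iff_isRoot.mp <| (dvd_pow_self _ (Nat.sub_ne_zero_of_lt hs)).trans
    (pow_sub_dvd_iterate_derivative_of_pow_dvd _ h)

theorem eval_iterate_derivative_X_sq_sub_one_pow {n s : ℕ} (hs : s < n) :
    (derivative^[s] ((X ^ 2 - 1 : R[X]) ^ n)).eval (-1) = 0 ∧
      (derivative^[s] ((X ^ 2 - 1 : R[X]) ^ n)).eval 1 = 0 := by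
  have hfactor : (X ^ 2 - 1 : R[X]) = (X - C (-1)) * (X - C 1) := by
    simp only [map_one, map_neg]; ring
  exact ⟨eval_iterate_derivative_eq_zero_of_pow_dvd
      (pow_dvd_pow_of_dvd (hfactor ▸ dvd_mul_right _ _) n) hs,
    eval_iterate_derivative_eq_zero_of_pow_dvd
      (pow_dvd_pow_of_dvd (hfactor ▸ dvd_mul_left _ _) n) hs⟩

end CommRing

theorem integral_eval_mul_eval_derivative (p q : ℝ[X]) (a b : ℝ) :
    ∫ x in a..b, p.eval x * (derivative q).eval x =
      p.eval b * q.eval b - p.eval a * q.eval a - ∫ x in a..b, (derivative p).eval x * q.eval x :=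
  integral_mul_deriv_eq_deriv_mul (fun x _ => p.hasDerivAt x) (fun x _ => q.hasDerivAt x)
    ((derivative p).continuous.intervalIntegrable _ _)
    ((derivative q).continuous.intervalIntegrable _ _)

theorem integral_eval_mul_eval_iterate_derivative {q : ℝ[X]} {a b : ℝ} {n : ℕ}
    (hq : ∀ s < n, (derivative^[s] q).eval a = 0 ∧ (derivative^[s] q).eval b = 0) (p : ℝ[X]) :
    ∫ x in a..b, p.eval x * (derivative^[n] q).eval x =
      (-1) ^ n * ∫ x in a..b, (derivative^[n] p).eval x * q.eval x := by
  induction n generalizing p with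
  | zero => simp
  | succ n ih =>
    obtain ⟨hqa, hqb⟩ := hq n n.lt_succ_self
    rw [Function.iterate_succ_apply', integral_eval_mul_eval_derivative, hqa, hqb,
      ih (fun s hs => hq s (hs.trans n.lt_succ_self)), Function.iterate_succ_apply]
    ring

end Polynomial

theorem integral_one_sub_sq_pow_succ (n : ℕ) :
    (2 * (n : ℝ) + 3) * ∫ x in (-1 : ℝ)..1, (1 - x ^ 2) ^ (n + 1) =
      (2 * n + 2) * ∫ x in (-1 : ℝ)..1, (1 - x ^ 2) ^ n := by
  have hibp := integral_eval_mul_eval_derivative ((1 - X ^ 2) ^ (n + 1)) X (-1) 1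
  have hderiv (x : ℝ) : (derivative ((1 - X ^ 2) ^ (n + 1))).eval x * x =
      -(2 * n + 2) * ((1 - x ^ 2) ^ n - (1 - x ^ 2) ^ (n + 1)) := by
    simp only [derivative_pow, derivative_sub, derivative_one, derivative_X, eval_mul, eval_C,
      eval_pow, eval_sub, eval_one, eval_X, eval_zero, Nat.add_sub_cancel]
    push_cast
    ring
  have hcont (m : ℕ) : IntervalIntegrable (fun x : ℝ => (1 - x ^ 2) ^ m) volume (-1) 1 :=
    (by fun_prop : Continuous fun x : ℝ => (1 - x ^ 2) ^ m).intervalIntegrable _ _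
  simp only [eval_pow, eval_sub, eval_one, eval_X, derivative_X, mul_one, hderiv,
    intervalIntegral.integral_const_mul] at hibp
  rw [integral_sub (hcont n) (hcont (n + 1))] at hibp
  norm_num at hibp
  linear_combination hibp

theorem integral_one_sub_sq_pow (n : ℕ) :
    ∫ x in (-1 : ℝ)..1, (1 - x ^ 2) ^ n =
      2 ^ (2 * n + 1) * (n.factorial : ℝ) ^ 2 / (2 * n + 1).factorial := by
  induction n with
  | zero => norm_num
  | succ n ih =>
    have hrec := integral_one_sub_sq_pow_succ n
    rw [ih] at hrec
    rw [show 2 * (n + 1) + 1 = 2 * n + 1 + 1 + 1 by ring, Nat.factorial_succ (2 * n + 1 + 1),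
      Nat.factorial_succ (2 * n + 1), Nat.factorial_succ n]
    push_cast
    field_simp at hrec ⊢
    linear_combination (2 * (n : ℝ) + 2) * hrec

theorem natDegree_legendre_le (n : ℕ) : (legendre n).natDegree ≤ n := by
  have h := natDegree_iterate_derivative ((X ^ 2 - 1 : ℝ[X]) ^ n) n
  have := natDegree_X_sq_sub_one_pow_le (R := ℝ) n
  exact (natDegree_smul_le _ _).trans (by omega)

theorem integral_eval_mul_legendre (p : ℝ[X]) (n : ℕ) :
    ∫ x in (-1 : ℝ)..1, p.eval x * (legendre n).eval x =
      (-1) ^ n / (2 ^ n * n.factorial) *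
        ∫ x in (-1 : ℝ)..1, (derivative^[n] p).eval x * (x ^ 2 - 1) ^ n := by
  simp only [legendre, eval_smul, smul_eq_mul, mul_left_comm _ (1 / _ : ℝ),
    intervalIntegral.integral_const_mul]
  rw [integral_eval_mul_eval_iterate_derivative
    (fun s hs => eval_iterate_derivative_X_sq_sub_one_pow hs)]
  simp only [eval_pow, eval_sub, eval_X, eval_one]
  ring

theorem integral_eval_mul_legendre_eq_zero {p : ℝ[X]} {n : ℕ} (hp : p.natDegree < n) :
    ∫ x in (-1 : ℝ)..1, p.eval x * (legendre n).eval x = 0 := by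
  simp [integral_eval_mul_legendre, iterate_derivative_eq_zero hp]

theorem integral_legendre_mul_self (n : ℕ) :
    ∫ x in (-1 : ℝ)..1, (legendre n).eval x * (legendre n).eval x = 2 / (2 * n + 1) := by
  have hder :
      derivative^[n] (legendre n) = C ((2 * n).factorial / (2 ^ n * n.factorial) : ℝ) := by
    rw [legendre, iterate_derivative_smul, ← Function.iterate_add_apply, ← two_mul,
      iterate_derivative_X_sq_sub_one_pow_two_mul, smul_C, smul_eq_mul]
    ring_nf
  have hsq (x : ℝ) : (x ^ 2 - 1) ^ n = (-1) ^ n * (1 - x ^ 2) ^ n := by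
    rw [← mul_pow]; ring
  simp only [integral_eval_mul_legendre, hder, eval_C, hsq, intervalIntegral.integral_const_mul,
    integral_one_sub_sq_pow]
  rw [Nat.factorial_succ, pow_succ, two_mul, pow_add]
  push_cast
  rcases neg_one_pow_eq_or ℝ n with h | h <;>
  · rw [h]
    field_simp
    ring

theorem integral_legendre_mul_legendre (m n : ℕ) :
    ∫ x in (-1 : ℝ)..1, (legendre m).eval x * (legendre n).eval x =
      if m = n then 2 / (2 * (n : ℝ) + 1) else 0 := by
  split_ifs with h
  · subst h
    exact integral_legendre_mul_self m
  rcases Nat.lt_or_gt_of_ne h with h | h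
  · exact integral_eval_mul_legendre_eq_zero ((natDegree_legendre_le m).trans_lt h)
  · simp_rw [mul_comm ((legendre m).eval _)]
    exact integral_eval_mul_legendre_eq_zero ((natDegree_legendre_le n).trans_lt h)

theorem coeff_legendre (n t : ℕ) :
    (legendre n).coeff t =
      1 / (2 ^ n * n.factorial) * (t + n).descFactorial n *
        ((X ^ 2 - 1 : ℝ[X]) ^ n).coeff (t + n) := by
  simp only [legendre, coeff_smul, coeff_iterate_derivative, nsmul_eq_mul, smul_eq_mul, mul_assoc]

theorem coeff_legendre_add_two_mul (t d : ℕ) :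
    (legendre (t + 2 * d)).coeff t =
      (-1) ^ d * (2 * t + 2 * d).factorial /
        (2 ^ (t + 2 * d) * t.factorial * d.factorial * (t + d).factorial) := by
  have hdesc := Nat.factorial_mul_descFactorial (n := 2 * t + 2 * d) (k := t + 2 * d) (by omega)
  have hchoose := Nat.choose_mul_factorial_mul_factorial (n := t + 2 * d) (k := t + d) (by omega)
  rw [coeff_legendre, coeff_X_sq_sub_one_pow, if_pos ⟨t + d, by ring⟩,
    show (t + (t + 2 * d)) / 2 = t + d by omega, show t + 2 * d - (t + d) = d by omega,
    show t + (t + 2 * d) = 2 * t + 2 * d by ring]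
  rw [show 2 * t + 2 * d - (t + 2 * d) = t by omega] at hdesc
  rw [show t + 2 * d - (t + d) = d by omega] at hchoose
  have hchoose_ne : ((t + 2 * d).choose (t + d) : ℝ) ≠ 0 :=
    Nat.cast_ne_zero.mpr (Nat.choose_pos (by omega)).ne'
  rw [← hdesc, ← hchoose]
  push_cast
  field_simp

theorem coeff_legendre_eq_zero {n t : ℕ} (h : ¬ ∃ d, n = t + 2 * d) :
    (legendre n).coeff t = 0 := by
  rw [coeff_legendre, coeff_X_sq_sub_one_pow]
  split_ifs with h2
  · have hlt : n < (t + n) / 2 := by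
      by_contra hle
      exact h ⟨(n - t) / 2, by omega⟩
    simp [Nat.choose_eq_zero_of_lt hlt]
  · simp

theorem Gmat_succ_succ (t n : ℕ) :
    Gmat (t + 1) (n + 1) = (2 * n + 1) / 2 * (legendre n).coeff t := by
  by_cases h : ∃ d, n = t + 2 * d
  · obtain ⟨d, rfl⟩ := h
    rw [coeff_legendre_add_two_mul, Gmat, if_pos (by omega),
      show (t + 2 * d + 1 - (t + 1)) / 2 = d by omega,
      show t + 2 * d + 1 + (t + 1) - 2 = 2 * t + 2 * d by omega,
      show (t + 2 * d + 1 + (t + 1)) / 2 - 1 = t + d by omega, Nat.add_sub_cancel]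
    push_cast
    field_simp
    ring
  · rw [coeff_legendre_eq_zero h, Gmat, if_neg (fun hc => h ⟨(n - t) / 2, by omega⟩), mul_zero]

theorem sum_Gmat_mul_pow {N n : ℕ} (hn : n < N) (x : ℝ) :
    ∑ k ∈ Finset.Icc 1 N, Gmat k (n + 1) * x ^ (k - 1) =
      (2 * n + 1) / 2 * (legendre n).eval x := by
  rw [eval_eq_sum_range' ((natDegree_legendre_le n).trans_lt hn), Finset.mul_sum,
    ← Finset.Ico_add_one_right_eq_Icc, Finset.sum_Ico_eq_sum_range, Nat.add_sub_cancel]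
  refine Finset.sum_congr rfl fun t _ => ?_
  rw [add_comm 1 t, Gmat_succ_succ, Nat.add_sub_cancel, mul_assoc]

theorem sum_Fmat_mul (i : ℕ) (s : Finset ℕ) (c : ℕ → ℝ) :
    ∑ k ∈ s, Fmat i k * c k =
      ∫ η in (-1 : ℝ)..1, (legendre (i - 1)).eval η * ∑ k ∈ s, c k * η ^ (k - 1) := by
  simp_rw [Finset.mul_sum, Fmat, ← intervalIntegral.integral_mul_const]
  rw [intervalIntegral.integral_finsetSum fun k _ => by
    apply Continuous.intervalIntegrable; fun_prop]
  refine Finset.sum_congr rfl fun k _ => intervalIntegral.integral_congr fun η _ => ?_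
  ring

theorem stmt_12_general (N : ℕ) (i j : ℕ) (hi1 : 1 ≤ i)
    (hj1 : 1 ≤ j) (hjN : j ≤ N) :
    (∑ k ∈ Finset.Icc 1 N, Fmat i k * Gmat k j) = if i = j then 1 else 0 := by
  obtain ⟨m, rfl⟩ : ∃ m, i = m + 1 := ⟨i - 1, by omega⟩
  obtain ⟨n, rfl⟩ : ∃ n, j = n + 1 := ⟨j - 1, by omega⟩
  rw [sum_Fmat_mul]
  simp_rw [sum_Gmat_mul_pow (show n < N by omega), mul_left_comm _ ((2 * (n : ℝ) + 1) / 2)]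
  rw [intervalIntegral.integral_const_mul, Nat.add_sub_cancel, integral_legendre_mul_legendre]
  simp only [add_left_inj]
  split_ifs
  · field_simp
  · rw [mul_zero]

/-- For every N ≥ 1, the N × N matrix G is the inverse of the N × N matrix F:
Σ_{k=1}^{N} F_{ik} G_{kj} = δ_{ij} for all 1 ≤ i, j ≤ N. -/
theorem stmt_12 (N : ℕ) (hN : 1 ≤ N) (i j : ℕ) (hi1 : 1 ≤ i) (hiN : i ≤ N)
    (hj1 : 1 ≤ j) (hjN : j ≤ N) :
    (∑ k ∈ Finset.Icc 1 N, Fmat i k * Gmat k j) = if i = j then 1 else 0 :=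
  stmt_12_general N i j hi1 hj1 hjN
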